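/- arXiv:1811.06489 — 2 statements merged into one kernel-verified Lean document; each statement's English description precedes it below -/
import Mathlib

section
/- Let A = { y ∈ 2^ω : ∃n (y starts with 0^n⌢111) } and x = 0^ω. Then d^μ_A(x) = 1/4 (strictly between 0 and 1), but x is not an I_μ-shift density point of A: there is a Borel set B with μ(B) ≥ 1/2 such that σ_{0^n}(B) ∩ A = ∅ for all n (namely B = 2^ω \ A). -/
open MeasureTheory Filter Set
open scoped ENNReal

noncomputable section

/-- The restriction `x↾n` of `x : ℕ → α` to its first `n` values, as a list. -/
def res {α : Type*} (x : ℕ → α) (n : ℕ) : List α := List.ofFn (fun i : Fin n => x i)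

/-- The basic clopen cylinder `N_s` of all extensions of the finite string `s`. -/
def Cyl {α : Type*} (s : List α) : Set (ℕ → α) := {x | res x s.length = s}

/-- The shift `σ_s : y ↦ s⌢y` by the finite string `s`. -/
def shiftMap {α : Type*} (s : List α) (x : ℕ → α) : ℕ → α :=
  fun n => if h : n < s.length then s.get ⟨n, h⟩ else x (n - s.length)

/-- The lower density `d^μ_A(x) = liminf_n μ(A ∩ N_{x↾n}) / μ(N_{x↾n})`. -/
def dLower (μ : Measure (ℕ → Bool)) (A : Set (ℕ → Bool)) (x : ℕ → Bool) : ℝ≥0∞ :=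
  Filter.liminf (fun n => μ (A ∩ Cyl (res x n)) / μ (Cyl (res x n))) Filter.atTop


/-- The set `A = { y : ∃n, y starts with 0^n⌢111 }`. -/
def A0 : Set (ℕ → Bool) :=
  {y | ∃ n : ℕ, (∀ i < n, y i = false) ∧ y n = true ∧ y (n + 1) = true ∧ y (n + 2) = true}

lemma mem_Cyl {s : List Bool} {y : ℕ → Bool} :
    y ∈ Cyl s ↔ ∀ i (h : i < s.length), y i = s.get ⟨i, h⟩ := by
  constructor
  · intro h i hi
    have hh := List.get_of_eq h ⟨i, by simpa [res] using hi⟩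
    simpa [res, List.get_ofFn] using hh
  · intro h
    apply List.ext_get
    · simp [res]
    · intro i h1 h2
      simp [res, List.get_ofFn]
      exact h i h2

/-- The string `0^m⌢111`. -/
def Estr (m : ℕ) : List Bool := List.ofFn (fun i : Fin (m + 3) => decide (m ≤ (i : ℕ)))

lemma Estr_length (m : ℕ) : (Estr m).length = m + 3 := by simp [Estr]

lemma mem_CylE {m : ℕ} {y : ℕ → Bool} :
    y ∈ Cyl (Estr m) ↔
      (∀ i < m, y i = false) ∧ y m = true ∧ y (m + 1) = true ∧ y (m + 2) = true := by
  rw [mem_Cyl]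
  simp only [Estr, List.length_ofFn, List.get_ofFn, Fin.coe_cast]
  constructor
  · intro h
    refine ⟨fun i hi => ?_, ?_, ?_, ?_⟩
    · have := h i (by omega); simpa [Nat.not_le.mpr hi] using this
    · simpa using h m (by omega)
    · simpa using h (m + 1) (by omega)
    · simpa using h (m + 2) (by omega)
  · rintro ⟨h0, h1, h2, h3⟩ i hi
    rcases lt_or_ge i m with h | h
    · simp [h0 i h, Nat.not_le.mpr h]
    · have : i = m ∨ i = m + 1 ∨ i = m + 2 := by omega
      rcases this with rfl | rfl | rfl <;> simp [h1, h2, h3]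

lemma mem_CylZ {n : ℕ} {y : ℕ → Bool} :
    y ∈ Cyl (List.replicate n false) ↔ ∀ i < n, y i = false := by
  rw [mem_Cyl]
  simp [List.getElem_replicate]

lemma res_zero (n : ℕ) : res (fun _ => false) n = List.replicate n false := by
  apply List.ext_get <;> simp [res, List.getElem_replicate]

lemma measurableSet_Cyl (s : List Bool) : MeasurableSet (Cyl s) := by
  have h : Cyl s = ⋂ i : Fin s.length, {y : ℕ → Bool | y (i : ℕ) = s.get i} := by
    ext y
    simp only [mem_iInter, mem_setOf_eq, mem_Cyl]
    exact ⟨fun h i => h i i.2, fun h i hi => h ⟨i, hi⟩⟩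
  rw [h]
  exact MeasurableSet.iInter fun i =>
    (measurable_pi_apply (i : ℕ)) (measurableSet_singleton _)

lemma A0_eq : A0 = ⋃ m, Cyl (Estr m) := by
  ext y
  simp only [A0, mem_setOf_eq, mem_iUnion, mem_CylE]

lemma measurableSet_A0 : MeasurableSet A0 := by
  rw [A0_eq]; exact MeasurableSet.iUnion fun m => measurableSet_Cyl _

lemma disjE : Pairwise (Function.onFun Disjoint fun m => Cyl (Estr m)) := by
  intro a b hab
  simp only [Function.onFun, Set.disjoint_left]
  intro y hya hyb
  rw [mem_CylE] at hya hyb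
  rcases hab.lt_or_gt with h | h
  · have := hyb.1 a h; rw [hya.2.1] at this; simp at this
  · have := hya.1 b h; rw [hyb.2.1] at this; simp at this

lemma inter_eq (n : ℕ) :
    A0 ∩ Cyl (List.replicate n false) = ⋃ k, Cyl (Estr (n + k)) := by
  ext y
  simp only [mem_inter_iff, A0, mem_setOf_eq, mem_iUnion, mem_CylE, mem_CylZ]
  constructor
  · rintro ⟨⟨m, h0, h1, h2, h3⟩, hz⟩
    have hm : n ≤ m := by
      by_contra h
      push_neg at h
      rw [hz m h] at h1; simp at h1
    refine ⟨m - n, ?_⟩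
    rw [Nat.add_sub_cancel' hm]
    exact ⟨h0, h1, h2, h3⟩
  · rintro ⟨k, h0, h1, h2, h3⟩
    exact ⟨⟨n + k, h0, h1, h2, h3⟩, fun i hi => h0 i (by omega)⟩

lemma tsum_calc (n : ℕ) :
    (∑' k : ℕ, ((1 : ℝ≥0∞) / 2) ^ (n + k + 3)) = (1 / 2) ^ (n + 2) := by
  have h1 : ∀ k : ℕ, ((1 : ℝ≥0∞) / 2) ^ (n + k + 3) = (1 / 2) ^ (n + 3) * (1 / 2) ^ k := by
    intro k; rw [← pow_add]; ring_nf
  rw [tsum_congr h1, ENNReal.tsum_mul_left, ENNReal.tsum_geometric]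
  rw [one_div, ENNReal.one_sub_inv_two, inv_inv]
  rw [pow_succ, mul_assoc, ENNReal.inv_mul_cancel (by norm_num) (by norm_num), mul_one]

lemma numerator (μ : Measure (ℕ → Bool))
    (hμ : ∀ s : List Bool, μ (Cyl s) = (1 / 2 : ℝ≥0∞) ^ s.length) (n : ℕ) :
    μ (A0 ∩ Cyl (List.replicate n false)) = (1 / 2 : ℝ≥0∞) ^ (n + 2) := by
  rw [inter_eq]
  have hd : Pairwise (Function.onFun Disjoint fun k => Cyl (Estr (n + k))) := by
    intro a b hab
    exact disjE (by omega : n + a ≠ n + b)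
  rw [measure_iUnion hd fun k => measurableSet_Cyl _]
  have : ∀ k : ℕ, μ (Cyl (Estr (n + k))) = ((1 : ℝ≥0∞) / 2) ^ (n + k + 3) := by
    intro k; rw [hμ, Estr_length]
  rw [tsum_congr this, tsum_calc]

lemma half_sq : ((1 : ℝ≥0∞) / 2) ^ 2 = 1 / 4 := by
  rw [one_div, one_div, sq, ← ENNReal.mul_inv (by norm_num) (by norm_num)]
  norm_num

/-- `σ_{0^n}(y)` evaluated at `i`. -/
lemma shift_apply (n : ℕ) (y : ℕ → Bool) (i : ℕ) :
    shiftMap (List.replicate n false) y i = if i < n then false else y (i - n) := by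
  simp only [shiftMap, List.length_replicate]
  split_ifs with h
  · simp
  · rfl

lemma shift_empty (n : ℕ) : shiftMap (List.replicate n false) '' A0ᶜ ∩ A0 = ∅ := by
  rw [Set.eq_empty_iff_forall_notMem]
  rintro z ⟨⟨y, hy, rfl⟩, hz⟩
  apply hy
  obtain ⟨m, h0, h1, h2, h3⟩ := hz
  rw [shift_apply] at h1 h2 h3
  have hm : n ≤ m := by
    by_contra h
    push_neg at h
    rw [if_pos h] at h1
    exact absurd h1 (by simp)
  refine ⟨m - n, fun i hi => ?_, ?_, ?_, ?_⟩
  · have := h0 (i + n) (by omega)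
    rw [shift_apply, if_neg (by omega)] at this
    simpa [Nat.add_sub_cancel] using this
  · rw [if_neg (by omega)] at h1; exact h1
  · rw [if_neg (by omega)] at h2
    have : m + 1 - n = m - n + 1 := by omega
    rwa [this] at h2
  · rw [if_neg (by omega)] at h3
    have : m + 2 - n = m - n + 2 := by omega
    rwa [this] at h3

/-- With `x = 0^ω`: `d^μ_A(x) = 1/4`, but `x` is not an `I_μ`-shift density point of `A`:
there is a Borel set `B` with `μ(B) ≥ 1/2` and `σ_{0^n}(B) ∩ A = ∅` for all `n`. -/
theorem stmt3 (μ : Measure (ℕ → Bool))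
    (hμ : ∀ s : List Bool, μ (Cyl s) = (1 / 2 : ℝ≥0∞) ^ s.length) :
    dLower μ A0 (fun _ => false) = 1 / 4 ∧
      ∃ B : Set (ℕ → Bool), MeasurableSet B ∧ (1 / 2 : ℝ≥0∞) ≤ μ B ∧
        ∀ n : ℕ, shiftMap (res (fun _ => false) n) '' B ∩ A0 = ∅ := by
  have hA0 : μ A0 = 1 / 4 := by
    have huniv : Cyl (List.replicate 0 false) = (univ : Set (ℕ → Bool)) := by
      ext y; simp only [Set.mem_univ, iff_true]; exact mem_CylZ.mpr (by omega)
    have := numerator μ hμ 0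
    rw [huniv, Set.inter_univ] at this
    rw [this, zero_add, half_sq]
  constructor
  · have hconst : (fun n => μ (A0 ∩ Cyl (res (fun _ => false) n)) /
        μ (Cyl (res (fun _ => false) n))) = fun _ : ℕ => (1 / 4 : ℝ≥0∞) := by
      funext n
      rw [res_zero, numerator μ hμ n, hμ, List.length_replicate, pow_add,
        mul_comm, mul_div_assoc,
        ENNReal.div_self (pow_ne_zero n (by norm_num)) (ENNReal.pow_ne_top (by norm_num)),
        mul_one, half_sq]
    rw [dLower, hconst, Filter.liminf_const]
  · refine ⟨A0ᶜ, measurableSet_A0.compl, ?_, ?_⟩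
    · have hcompl : μ A0ᶜ = μ univ - μ A0 :=
        measure_compl measurableSet_A0 (by rw [hA0]; exact (by norm_num))
      have huniv : μ (univ : Set (ℕ → Bool)) = 1 := by
        have h0 : Cyl ([] : List Bool) = (univ : Set (ℕ → Bool)) := by
          ext y; simp only [Set.mem_univ, iff_true]; exact mem_Cyl.mpr (fun i h => absurd h (Nat.not_lt_zero i))
        rw [← h0, hμ]; simp
      rw [hcompl, huniv, hA0]
      refine ENNReal.le_sub_of_add_le_right (by norm_num) ?_
      rw [one_div, one_div]
      calc (2 : ℝ≥0∞)⁻¹ + 4⁻¹ ≤ 2⁻¹ + 2⁻¹ :=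
            add_le_add le_rfl (ENNReal.inv_le_inv.2 (by norm_num))
        _ = 1 := ENNReal.inv_two_add_inv_two
    · intro n
      rw [res_zero]
      exact shift_empty n
end
end

section
/- If P is a ccc tree forcing, then a subset A of ω^Ω is P-measurable iff there is a Borel set B with A △ B ∈ I_P. -/
open Set

noncomputable section

/-- A (set-theoretic) tree on `α`: a collection of finite sequences closed under
initial segments. -/
def IsTree {α : Type*} (T : Set (List α)) : Prop :=
  ∀ s ∈ T, ∀ t : List α, t <+: s → t ∈ T

/-- The set `[T]` of branches of a tree `T`. -/
def branches {α : Type*} (T : Set (List α)) : Set (ℕ → α) :=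
  {x | ∀ n : ℕ, res x n ∈ T}

/-- A perfect tree: a nonempty tree with a splitting node above every node. -/
def IsPerfectTree {α : Type*} (T : Set (List α)) : Prop :=
  IsTree T ∧ T.Nonempty ∧
    ∀ s ∈ T, ∃ t ∈ T, s <+: t ∧ ∃ a b : α, a ≠ b ∧ t ++ [a] ∈ T ∧ t ++ [b] ∈ T

/-- A tree forcing: a collection of perfect trees containing the full tree and closed
under restriction `T ↦ T_u`. -/
def IsTreeForcing {α : Type*} (P : Set (Set (List α))) : Prop :=
  (∀ T ∈ P, IsPerfectTree T) ∧ Set.univ ∈ P ∧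
    ∀ T ∈ P, ∀ u ∈ T, {t ∈ T | u <+: t ∨ t <+: u} ∈ P

/-- `A` is `P`-nowhere dense. -/
def PNwd {α : Type*} (P : Set (Set (List α))) (A : Set (ℕ → α)) : Prop :=
  ∀ T ∈ P, ∃ S ∈ P, S ⊆ T ∧ branches S ∩ A = ∅

/-- `A` belongs to the σ-ideal `I_P` generated by the `P`-nowhere dense sets. -/
def PIdeal {α : Type*} (P : Set (Set (List α))) (A : Set (ℕ → α)) : Prop :=
  ∃ f : ℕ → Set (ℕ → α), (∀ n, PNwd P (f n)) ∧ A ⊆ ⋃ n, f n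

/-- `A` belongs to the auxiliary ideal `I*_P`. -/
def PIstar {α : Type*} (P : Set (Set (List α))) (A : Set (ℕ → α)) : Prop :=
  ∀ T ∈ P, ∃ S ∈ P, S ⊆ T ∧ PIdeal P (branches S ∩ A)

/-- `A` is `P`-measurable. -/
def PMeasurable {α : Type*} (P : Set (Set (List α))) (A : Set (ℕ → α)) : Prop :=
  ∀ T ∈ P, ∃ S ∈ P, S ⊆ T ∧ (PIdeal P (branches S \ A) ∨ PIdeal P (branches S ∩ A))

/-- Compatibility of two conditions in the tree forcing `P`. -/
def Compat {α : Type*} (P : Set (Set (List α))) (S T : Set (List α)) : Prop :=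
  ∃ R ∈ P, R ⊆ S ∧ R ⊆ T

/-- `D` is an antichain in the tree forcing `P`. -/
def IsAntichainIn {α : Type*} (P D : Set (Set (List α))) : Prop :=
  D ⊆ P ∧ ∀ S ∈ D, ∀ T ∈ D, S ≠ T → ¬ Compat P S T

/-- `D` is a maximal antichain in the tree forcing `P`. -/
def IsMaxAntichainIn {α : Type*} (P D : Set (Set (List α))) : Prop :=
  IsAntichainIn P D ∧ ∀ T ∈ P, ∃ S ∈ D, Compat P S T

/-- `s` is the stem of the tree `T`: the longest node comparable with all nodes of `T`. -/
def IsStem {α : Type*} (T : Set (List α)) (s : List α) : Prop :=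
  s ∈ T ∧ (∀ t ∈ T, s <+: t ∨ t <+: s) ∧
    ∀ s' ∈ T, (∀ t ∈ T, s' <+: t ∨ t <+: s') → s'.length ≤ s.length

/-!
Under ccc, every family of conditions that is dense below a condition `T` contains a countable
antichain `D` which is maximal in it, and the branches of `T` outside `⋃_{S ∈ D} [S]` then form
a `P`-nowhere dense set. Applied to the conditions `S` with `[S] ∩ A ∈ I_P`, this shows that the
`P`-measurable sets form a σ-algebra; it contains the cylinders, hence all Borel sets, and is
closed under changes by sets in `I_P`. Applied to the conditions deciding a `P`-measurable `A`,
it gives the Borel set `B = ⋃ {[S] | S ∈ D, [S] \ A ∈ I_P}` with `A △ B ∈ I_P`.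
-/

variable {α : Type*} {P : Set (Set (List α))}

lemma pnwd_empty : PNwd P (∅ : Set (ℕ → α)) :=
  fun T hT => ⟨T, hT, subset_rfl, inter_empty _⟩

lemma PNwd.pideal {A : Set (ℕ → α)} (h : PNwd P A) : PIdeal P A :=
  ⟨fun _ => A, fun _ => h, subset_iUnion (fun _ => A) 0⟩

lemma pideal_empty : PIdeal P (∅ : Set (ℕ → α)) :=
  pnwd_empty.pideal

lemma PIdeal.mono {A B : Set (ℕ → α)} (hA : PIdeal P A) (hBA : B ⊆ A) : PIdeal P B :=
  let ⟨f, hf, hAf⟩ := hA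
  ⟨f, hf, hBA.trans hAf⟩

lemma pideal_iff_countable {A : Set (ℕ → α)} :
    PIdeal P A ↔ ∃ F : Set (Set (ℕ → α)), F.Countable ∧ (∀ N ∈ F, PNwd P N) ∧ A ⊆ ⋃₀ F := by
  constructor
  · rintro ⟨f, hf, hA⟩
    exact ⟨range f, countable_range f, forall_mem_range.2 hf, by rwa [sUnion_range]⟩
  · rintro ⟨F, hFc, hF, hA⟩
    -- `insert ∅ F` is nonempty, so it can be enumerated by `ℕ`
    obtain ⟨f, hf⟩ := (hFc.insert ∅).exists_eq_range (insert_nonempty _ _)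
    refine ⟨f, fun n => ?_, ?_⟩
    · rcases (hf ▸ mem_range_self n : f n ∈ insert ∅ F) with h | h
      · exact h ▸ pnwd_empty
      · exact hF _ h
    · rw [← sUnion_range, ← hf, sUnion_insert, empty_union]
      exact hA

lemma pideal_iUnion {ι : Sort*} [Countable ι] {g : ι → Set (ℕ → α)}
    (h : ∀ i, PIdeal P (g i)) : PIdeal P (⋃ i, g i) := by
  simp only [pideal_iff_countable] at h ⊢
  choose F hFc hF hg using h
  refine ⟨⋃ i, F i, countable_iUnion hFc, fun N hN => ?_,
    iUnion_subset fun i => (hg i).trans (sUnion_mono (subset_iUnion F i))⟩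
  obtain ⟨i, hi⟩ := mem_iUnion.1 hN
  exact hF i N hi

lemma pideal_biUnion {β : Type*} {D : Set β} (hD : D.Countable) {g : β → Set (ℕ → α)}
    (h : ∀ S ∈ D, PIdeal P (g S)) : PIdeal P (⋃ S ∈ D, g S) := by
  have := hD.to_subtype
  rw [biUnion_eq_iUnion]
  exact pideal_iUnion fun S => h S S.2

lemma PIdeal.union {A B : Set (ℕ → α)} (hA : PIdeal P A) (hB : PIdeal P B) :
    PIdeal P (A ∪ B) := by
  rw [union_eq_iUnion]
  exact pideal_iUnion (Bool.forall_bool.2 ⟨hB, hA⟩)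

lemma exists_maximal_antichain_subset {Q : Set (Set (List α))} (hQ : Q ⊆ P) :
    ∃ D ⊆ Q, IsAntichainIn P D ∧ ∀ R ∈ Q, ∃ S ∈ D, Compat P S R := by
  obtain ⟨D, ⟨hDQ, hD⟩, hmax⟩ := zorn_subset
    {D | D ⊆ Q ∧ ∀ S ∈ D, ∀ T ∈ D, S ≠ T → ¬ Compat P S T} fun c hc hchain => by
      refine ⟨⋃₀ c, ⟨sUnion_subset fun D hD => (hc hD).1, ?_⟩, fun _ => subset_sUnion_of_mem⟩
      rintro S ⟨D₁, hD₁, hS⟩ T ⟨D₂, hD₂, hT⟩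
      rcases hchain.total hD₁ hD₂ with h | h
      · exact (hc hD₂).2 S (h hS) T hT
      · exact (hc hD₁).2 S hS T (h hT)
  refine ⟨D, hDQ, ⟨hDQ.trans hQ, hD⟩, fun R hR => ?_⟩
  by_contra! hR_incompat
  have hRD : R ∉ D := fun hRD => hR_incompat R hRD ⟨R, hQ hR, subset_rfl, subset_rfl⟩
  refine hRD (hmax ⟨insert_subset hR hDQ, ?_⟩ (subset_insert R D) (mem_insert R D))
  rintro S (rfl | hS) T (rfl | hT) hne
  · exact absurd rfl hne
  · exact fun ⟨U, hU, hUS, hUT⟩ => hR_incompat T hT ⟨U, hU, hUT, hUS⟩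
  · exact hR_incompat S hS
  · exact hD S hS T hT hne

def treeRestrict (T : Set (List α)) (u : List α) : Set (List α) :=
  {t ∈ T | u <+: t ∨ t <+: u}

lemma treeRestrict_subset (T : Set (List α)) (u : List α) : treeRestrict T u ⊆ T :=
  fun _ ht => ht.1

lemma IsTreeForcing.treeRestrict_mem (hP : IsTreeForcing P) {T : Set (List α)} (hT : T ∈ P)
    {u : List α} (hu : u ∈ T) : treeRestrict T u ∈ P :=
  hP.2.2 T hT u hu

lemma res_length (x : ℕ → α) (n : ℕ) : (res x n).length = n := by
  simp [res]

lemma branches_mono {S T : Set (List α)} (h : S ⊆ T) : branches S ⊆ branches T :=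
  fun _ hx n => h (hx n)

lemma res_eq_of_mem_branches_treeRestrict {T : Set (List α)} {u : List α} {x : ℕ → α}
    (hx : x ∈ branches (treeRestrict T u)) : res x u.length = u := by
  rcases (hx u.length).2 with h | h
  · exact (h.eq_of_length (res_length x u.length).symm).symm
  · exact h.eq_of_length (res_length x u.length)

lemma IsPerfectTree.exists_le_length {T : Set (List α)} (hT : IsPerfectTree T) (m : ℕ) :
    ∃ v ∈ T, m ≤ v.length := by
  induction m with
  | zero => exact hT.2.1.imp fun v hv => ⟨hv, Nat.zero_le _⟩
  | succ k ih =>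
    obtain ⟨v, hv, hlen⟩ := ih
    obtain ⟨t, -, hvt, a, -, -, ha, -⟩ := hT.2.2 v hv
    refine ⟨t ++ [a], ha, ?_⟩
    simp only [List.length_append, List.length_singleton]
    have := hvt.length_le
    omega

lemma exists_treeRestrict_disjoint_or_subset {R : Set (List α)} (hP : IsTreeForcing P)
    (hR : R ∈ P) (T : Set (List α)) :
    (∃ R' ∈ P, R' ⊆ R ∧ branches R' ∩ branches T = ∅) ∨ R ⊆ T := by
  by_cases h : ∃ u ∈ R, branches (treeRestrict R u) ∩ branches T = ∅
  · obtain ⟨u, hu, hdisj⟩ := h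
    exact Or.inl ⟨_, hP.treeRestrict_mem hR hu, treeRestrict_subset R u, hdisj⟩
  · push Not at h
    refine Or.inr fun u hu => ?_
    obtain ⟨x, hxu, hxT⟩ := h u hu
    rw [← res_eq_of_mem_branches_treeRestrict hxu]
    exact hxT u.length

lemma exists_countable_pnwd_branches_diff (hP : IsTreeForcing P)
    (hccc : ∀ D : Set (Set (List α)), IsAntichainIn P D → D.Countable)
    {T : Set (List α)} {Q : Set (Set (List α))} (hQ : Q ⊆ P)
    (hdense : ∀ S ∈ P, S ⊆ T → ∃ S' ∈ Q, S' ⊆ S) :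
    ∃ D ⊆ Q, D.Countable ∧ PNwd P (branches T \ ⋃ S ∈ D, branches S) := by
  obtain ⟨D, hDQ, hanti, hmax⟩ := exists_maximal_antichain_subset hQ
  refine ⟨D, hDQ, hccc D hanti, fun R hR => ?_⟩
  rcases exists_treeRestrict_disjoint_or_subset hP hR T with ⟨R', hR', hR'R, hdisj⟩ | hRT
  · refine ⟨R', hR', hR'R, subset_empty_iff.1 ?_⟩
    exact hdisj ▸ inter_subset_inter_right _ sdiff_subset
  · obtain ⟨S', hS'Q, hS'R⟩ := hdense R hR hRT
    obtain ⟨S, hSD, R₀, hR₀, hR₀S, hR₀S'⟩ := hmax S' hS'Q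
    refine ⟨R₀, hR₀, hR₀S'.trans hS'R, eq_empty_iff_forall_notMem.2 ?_⟩
    rintro x ⟨hxR₀, -, hxD⟩
    exact hxD (mem_biUnion hSD (branches_mono hR₀S hxR₀))

lemma pideal_branches_inter_of_dense (hP : IsTreeForcing P)
    (hccc : ∀ D : Set (Set (List α)), IsAntichainIn P D → D.Countable)
    {T : Set (List α)} {A : Set (ℕ → α)}
    (hdense : ∀ S ∈ P, S ⊆ T → ∃ S' ∈ P, S' ⊆ S ∧ PIdeal P (branches S' ∩ A)) :
    PIdeal P (branches T ∩ A) := by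
  obtain ⟨D, hDQ, hDc, hnwd⟩ := exists_countable_pnwd_branches_diff hP hccc
    (Q := {S ∈ P | PIdeal P (branches S ∩ A)}) (fun S hS => hS.1)
    fun S hS hST => (hdense S hS hST).imp fun S' ⟨hS', hS'S, hI⟩ => ⟨⟨hS', hI⟩, hS'S⟩
  refine ((pideal_biUnion hDc fun S hS => (hDQ hS).2).union hnwd.pideal).mono ?_
  rintro x ⟨hxT, hxA⟩
  by_cases hx : x ∈ ⋃ S ∈ D, branches S
  · obtain ⟨S, hSD, hxS⟩ := mem_iUnion₂.1 hx
    exact Or.inl (mem_biUnion hSD ⟨hxS, hxA⟩)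
  · exact Or.inr ⟨hxT, hx⟩

lemma pMeasurable_empty : PMeasurable P (∅ : Set (ℕ → α)) :=
  fun T hT => ⟨T, hT, subset_rfl, Or.inr (by rw [inter_empty]; exact pideal_empty)⟩

lemma PMeasurable.compl {A : Set (ℕ → α)} (h : PMeasurable P A) : PMeasurable P Aᶜ := by
  intro T hT
  obtain ⟨S, hS, hST, hdec⟩ := h T hT
  rw [← sdiff_compl, sdiff_eq] at hdec
  exact ⟨S, hS, hST, hdec.symm⟩

lemma pMeasurable_iUnion (hP : IsTreeForcing P)
    (hccc : ∀ D : Set (Set (List α)), IsAntichainIn P D → D.Countable)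
    {ι : Sort*} [Countable ι] {g : ι → Set (ℕ → α)} (h : ∀ i, PMeasurable P (g i)) :
    PMeasurable P (⋃ i, g i) := by
  intro T hT
  by_cases hbig : ∃ i, ∃ S ∈ P, S ⊆ T ∧ PIdeal P (branches S \ g i)
  · obtain ⟨i, S, hS, hST, hI⟩ := hbig
    exact ⟨S, hS, hST, Or.inl (hI.mono (sdiff_subset_sdiff_right (subset_iUnion g i)))⟩
  · push Not at hbig
    -- no condition below `T` forces `g i`, so the conditions deciding `g i` make it small
    have hsmall : ∀ i, PIdeal P (branches T ∩ g i) := fun i =>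
      pideal_branches_inter_of_dense hP hccc fun S hS hST => by
        obtain ⟨S', hS', hS'S, hdec⟩ := h i S hS
        exact ⟨S', hS', hS'S, hdec.resolve_left (hbig i S' hS' (hS'S.trans hST))⟩
    refine ⟨T, hT, subset_rfl, Or.inr ?_⟩
    rw [inter_iUnion]
    exact pideal_iUnion hsmall

lemma PMeasurable.of_pideal_symmDiff {A B : Set (ℕ → α)} (hB : PMeasurable P B)
    (hAB : PIdeal P (symmDiff A B)) : PMeasurable P A := by
  intro T hT
  obtain ⟨S, hS, hST, hdec⟩ := hB T hT
  refine ⟨S, hS, hST,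
    hdec.imp (fun hI => (hI.union hAB).mono ?_) (fun hI => (hI.union hAB).mono ?_)⟩
  · rintro x ⟨hxS, hxA⟩
    by_cases hxB : x ∈ B
    · exact Or.inr (Or.inr ⟨hxB, hxA⟩)
    · exact Or.inl ⟨hxS, hxB⟩
  · rintro x ⟨hxS, hxA⟩
    by_cases hxB : x ∈ B
    · exact Or.inl ⟨hxS, hxB⟩
    · exact Or.inr (Or.inl ⟨hxA, hxB⟩)

lemma exists_subset_forall_mem_branches_apply_eq (hP : IsTreeForcing P) {T : Set (List α)}
    (hT : T ∈ P) (i : ℕ) : ∃ S ∈ P, S ⊆ T ∧ ∃ a, ∀ x ∈ branches S, x i = a := by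
  obtain ⟨v, hv, hlen⟩ := (hP.1 T hT).exists_le_length (i + 1)
  refine ⟨_, hP.treeRestrict_mem hT hv, treeRestrict_subset T v, v[i], fun x hx => ?_⟩
  have := congrArg (·[i]?) (res_eq_of_mem_branches_treeRestrict hx)
  simpa [res, List.getElem?_ofFn, show i < v.length by omega] using this

lemma pMeasurable_preimage_apply (hP : IsTreeForcing P) (i : ℕ) (s : Set α) :
    PMeasurable P ((fun x : ℕ → α => x i) ⁻¹' s) := by
  intro T hT
  obtain ⟨S, hS, hST, a, ha⟩ := exists_subset_forall_mem_branches_apply_eq hP hT i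
  refine ⟨S, hS, hST, ?_⟩
  by_cases has : a ∈ s
  · exact Or.inl (pideal_empty.mono fun x ⟨hxS, hxs⟩ => hxs (show x i ∈ s from ha x hxS ▸ has))
  · exact Or.inr (pideal_empty.mono fun x ⟨hxS, hxs⟩ => has (ha x hxS ▸ hxs))

lemma MeasurableSet.pMeasurable [MeasurableSpace α] (hP : IsTreeForcing P)
    (hccc : ∀ D : Set (Set (List α)), IsAntichainIn P D → D.Countable)
    {B : Set (ℕ → α)} (hB : MeasurableSet B) : PMeasurable P B := by
  let pMeasurableSpace : MeasurableSpace (ℕ → α) :=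
    { MeasurableSet' := PMeasurable P
      measurableSet_empty := pMeasurable_empty
      measurableSet_compl := fun _ => PMeasurable.compl
      measurableSet_iUnion := fun _ => pMeasurable_iUnion hP hccc }
  have hle : MeasurableSpace.pi ≤ pMeasurableSpace :=
    iSup_le fun i => MeasurableSpace.comap_le_iff_le_map.2 fun s _ =>
      pMeasurable_preimage_apply hP i s
  exact hle B hB

lemma measurableSet_branches [MeasurableSpace α] [MeasurableSingletonClass α] [Countable α]
    (S : Set (List α)) : MeasurableSet (branches S) := by
  have : branches S =
      ⋂ n, (fun x : ℕ → α => fun i : Fin n => x i) ⁻¹' {v | List.ofFn v ∈ S} := by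
    ext x
    simp [branches, res]
  rw [this]
  exact MeasurableSet.iInter fun n => (to_countable _).measurableSet.preimage (by fun_prop)

lemma PMeasurable.exists_measurableSet_pideal_symmDiff [MeasurableSpace α]
    [MeasurableSingletonClass α] [Countable α] (hP : IsTreeForcing P)
    (hccc : ∀ D : Set (Set (List α)), IsAntichainIn P D → D.Countable)
    {A : Set (ℕ → α)} (hA : PMeasurable P A) :
    ∃ B : Set (ℕ → α), MeasurableSet B ∧ PIdeal P (symmDiff A B) := by
  obtain ⟨D, hDQ, hDc, hnwd⟩ := exists_countable_pnwd_branches_diff hP hccc (T := univ)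
    (Q := {S ∈ P | PIdeal P (branches S \ A) ∨ PIdeal P (branches S ∩ A)}) (fun S hS => hS.1)
    fun S hS _ => (hA S hS).imp fun S' ⟨hS', hS'S, hdec⟩ => ⟨⟨hS', hdec⟩, hS'S⟩
  set D₁ := {S ∈ D | PIdeal P (branches S \ A)}
  have hD₁c : D₁.Countable := hDc.mono (sep_subset D _)
  refine ⟨⋃ S ∈ D₁, branches S, .biUnion hD₁c fun S _ => measurableSet_branches S, ?_⟩
  have hAB : PIdeal P (A \ ⋃ S ∈ D₁, branches S) := by
    have hsmall : ∀ S ∈ D \ D₁, PIdeal P (branches S ∩ A) := fun S ⟨hSD, hSD₁⟩ =>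
      (hDQ hSD).2.resolve_left fun hI => hSD₁ ⟨hSD, hI⟩
    refine ((pideal_biUnion (hDc.mono sdiff_subset) hsmall).union hnwd.pideal).mono ?_
    rintro x ⟨hxA, hxD₁⟩
    by_cases hx : x ∈ ⋃ S ∈ D, branches S
    · obtain ⟨S, hSD, hxS⟩ := mem_iUnion₂.1 hx
      exact Or.inl (mem_biUnion ⟨hSD, fun hSD₁ => hxD₁ (mem_biUnion hSD₁ hxS)⟩ ⟨hxS, hxA⟩)
    · exact Or.inr ⟨fun _ => mem_univ _, hx⟩
  have hBA : PIdeal P ((⋃ S ∈ D₁, branches S) \ A) := by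
    simp only [iUnion_sdiff]
    exact pideal_biUnion hD₁c fun S hS => hS.2
  exact hAB.union hBA

/-- If `P` is a ccc tree forcing (on Baire space), then a set `A` is `P`-measurable
if and only if there is a Borel set `B` with `A △ B ∈ I_P`. -/
theorem stmt10 (P : Set (Set (List ℕ))) (hP : IsTreeForcing P)
    (hccc : ∀ D : Set (Set (List ℕ)), IsAntichainIn P D → D.Countable)
    (A : Set (ℕ → ℕ)) :
    PMeasurable P A ↔
      ∃ B : Set (ℕ → ℕ), MeasurableSet B ∧ PIdeal P (symmDiff A B) :=
  ⟨fun hA => hA.exists_measurableSet_pideal_symmDiff hP hccc,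
    fun ⟨_, hB, hAB⟩ => (hB.pMeasurable hP hccc).of_pideal_symmDiff hAB⟩
end
end
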